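/- arXiv:2008.08174 — 4 statements merged into one kernel-verified Lean document; each statement's English description precedes it below -/
import Mathlib

section
/- Let q ≥ 2, k ≥ 1 and n > 2k. For every admissible choice of the parameters, |C_nd| ≤ |Irr(n)|; moreover there exists an admissible choice of the parameters (a_j, c_j for j ∈ {1,…,k}, b, ā₁,…,ā₄, b̄₁,…,b̄₄) for which |C_nd| ≥ |Irr(n)| / ( 5 · q⁴ · ⌈(n−k)/2⌉² · (4⌈n/k⌉² − 1)^k · (n−k)² ). -/
/-!
The constraints defining `C_nd` prescribe the values of finitely many syndromes of `x`:
the pairs `(a_j, c_j)` computed from `s_j`, the weight `b` mod 5, and four Tenengolts pairs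
`(ā_i, b̄_i)`. Mapping every irreducible string to its syndrome sends `Irr(n)` into a box of at
most `5 q⁴ ⌈(n-k)/2⌉² (4⌈n/k⌉² - 1)^k (n-k)²` points, because `|s_j| < ⌈n/k⌉` gives
`(2|s_j| + 3)(2|s_j| + 1) ≤ 4⌈n/k⌉² - 1`. Each fibre lies in the code whose parameters are
the fibre's syndrome, so by pigeonhole some admissible `C_nd` has at least `|Irr(n)|` divided
by the box size elements. The upper bound is just `C_nd ⊆ Irr(n)`.
-/

open List

namespace NoisyDup

variable {q : ℕ}

/-- Tandem duplication `T_{i,k}`: duplicates the length-`k` substring starting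
after position `i` (0-based index `i`), if it exists. -/
def dup (i k : ℕ) (x : List (ZMod q)) : List (ZMod q) :=
  if i + k ≤ x.length then x.take i ++ (x.drop i).take k ++ x.drop i else x

/-- Add `a` (mod `q`) to the entry at 0-based index `i`. -/
def addAt (x : List (ZMod q)) (i : ℕ) (a : ZMod q) : List (ZMod q) :=
  x.set i (x.getD i 0 + a)

/-- One exact tandem duplication of length `k`. -/
def ExactStep (k : ℕ) (x y : List (ZMod q)) : Prop :=
  ∃ i, i + k ≤ x.length ∧ y = dup i k x

/-- One noisy duplication of length `k`: an exact duplication followed by adding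
some `a ≠ 0` to one symbol of the inserted copy (positions are 1-indexed). -/
def NoisyStep (k : ℕ) (x y : List (ZMod q)) : Prop :=
  ∃ (i : ℕ) (a : ZMod q) (j : ℕ), i + k ≤ x.length ∧ a ≠ 0 ∧
    i + k + 1 ≤ j ∧ j ≤ i + 2 * k ∧ y = addAt (dup i k x) (j - 1) a

/-- Descendants by exact duplications only: `D_k^{*(0)}`. -/
def ExactDesc (k : ℕ) (x y : List (ZMod q)) : Prop :=
  Relation.ReflTransGen (ExactStep k) x y

/-- The descendant cone `D_k^{*(≤1)}`: any number of exact duplications and at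
most one noisy duplication. -/
def descCone (k : ℕ) (x : List (ZMod q)) : Set (List (ZMod q)) :=
  {y | ExactDesc k x y ∨ ∃ u v, ExactDesc k x u ∧ NoisyStep k u v ∧ ExactDesc k v y}

/-- `φ̂(x)`: the first `k` symbols. -/
def hatPhi (k : ℕ) (x : List (ZMod q)) : List (ZMod q) := x.take k

/-- `φ̄(x)_i = x_{i+k} - x_i` (1-indexed), a string of length `|x| - k`. -/
def barPhi (k : ℕ) (x : List (ZMod q)) : List (ZMod q) :=
  (List.range (x.length - k)).map fun i => x.getD (i + k) 0 - x.getD i 0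

/-- Auxiliary for `mu`: `cnt` counts the current run of zeros. -/
def muAux (k : ℕ) : ℕ → List (ZMod q) → List (ZMod q)
  | cnt, [] => List.replicate (cnt % k) 0
  | cnt, a :: t =>
      if a = 0 then muAux k (cnt + 1) t
      else List.replicate (cnt % k) 0 ++ a :: muAux k 0 t

/-- `μ(z)`: reduce the length of every maximal run of zeros modulo `k`. -/
def mu (k : ℕ) (z : List (ZMod q)) : List (ZMod q) := muAux k 0 z

/-- `x` contains a tandem repeat of length `k`. -/
def HasRepeat (k : ℕ) (x : List (ZMod q)) : Prop :=
  ∃ i, i + 2 * k ≤ x.length ∧ (x.drop i).take k = (x.drop (i + k)).take k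

/-- `x` is irreducible: it contains no tandem repeat of length `k`. -/
def IsIrreducible (k : ℕ) (x : List (ZMod q)) : Prop := ¬ HasRepeat k x

/-- The duplication root: the (unique) irreducible ancestor of `x` under exact
duplications of length `k`. -/
noncomputable def rt (k : ℕ) (x : List (ZMod q)) : List (ZMod q) :=
  haveI := Classical.propDecidable (∃ z, IsIrreducible k z ∧ ExactDesc k z x)
  if h : ∃ z, IsIrreducible k z ∧ ExactDesc k z x then h.choose else x

/-- The set of irreducible strings of length `n` over `Σ_q`. -/
def Irr (k n : ℕ) : Set (List (ZMod q)) := {x | x.length = n ∧ IsIrreducible k x}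

/-- `ins_k(u, j)`: the subsequence of entries in (1-indexed) positions congruent
to `j` modulo `k`. -/
def splitk (k j : ℕ) (u : List (ZMod q)) : List (ZMod q) :=
  ((u.zipIdx.map Prod.swap).filter fun p => p.1 % k == j - 1).map Prod.snd

/-- The interleaving `inl(u) = ins_k(u,1) ⋯ ins_k(u,k)`. -/
def inl (k : ℕ) (u : List (ZMod q)) : List (ZMod q) :=
  ((List.range k).map fun j => splitk k (j + 1) u).flatten

/-- The indicator `Γ(z)` of the nonzero entries of `z`. -/
def gamma (z : List (ZMod q)) : List Bool := z.map fun a => decide (a ≠ 0)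

/-- The cumulative-sum map (mod `q`). -/
def cusum (z : List (ZMod q)) : List (ZMod q) :=
  (List.range z.length).map fun i => (z.take (i + 1)).sum

/-- Hamming weight of a binary string. -/
def wt (u : List Bool) : ℕ := u.count true

/-- The VT syndrome `Σ i·u_i` (1-indexed). -/
def vtSum (u : List Bool) : ℕ := ((u.zipIdx.map Prod.swap).map fun p => if p.2 then p.1 + 1 else 0).sum

/-- The (variable-length) Varshamov–Tenengolts code. -/
def CVT (α m : ℕ) : Set (List Bool) := {z | z.length ≤ m - 1 ∧ vtSum z % m = α}

/-- `Σ_{i=1}^{|u|} i · (u_1 + ⋯ + u_i)`. -/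
def wSum (u : List Bool) : ℕ :=
  ((List.range u.length).map fun i => (i + 1) * wt (u.take (i + 1))).sum

/-- Tenengolts' binary map `ζ`. -/
def zeta (z : List (ZMod q)) : List Bool :=
  (z.zipIdx.map Prod.swap).map fun p => if p.1 = 0 then true else decide ((z.getD (p.1 - 1) 0).val ≤ p.2.val)

/-- `Σ_{i=1}^{|z|} (i-1)·ζ(z)_i`. -/
def tqSum (z : List (ZMod q)) : ℕ := (((zeta z).zipIdx.map Prod.swap).map fun p => if p.2 then p.1 else 0).sum

/-- Tenengolts' (variable-length) `q`-ary single-indel-correcting code. -/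
def CTq (α β m : ℕ) : Set (List (ZMod q)) :=
  {z | z.length ≤ m ∧ (z.map ZMod.val).sum % q = α ∧ tqSum z % m = β}

/-- The length of `s_j = Γ(ins_k(μ,j))` for a codeword of length `n`
(the number of positions in `{1,…,n-k}` congruent to `j` mod `k`). -/
def sLen (k n j : ℕ) : ℕ := (List.range (n - k)).countP fun i => i % k == j - 1

/-- Admissibility of the parameters of the code `C_nd`. -/
def Admissible (q k n : ℕ) (a c : ℕ → ℕ) (b a1 a2 a3 a4 b1 b2 b3 b4 : ℕ) : Prop :=
  (∀ j ∈ Finset.Icc 1 k, a j ≤ 2 * (sLen k n j + 1)) ∧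
  (∀ j ∈ Finset.Icc 1 k, c j ≤ 2 * sLen k n j) ∧
  b ≤ 4 ∧ a1 ≤ q - 1 ∧ a2 ≤ q - 1 ∧ a3 ≤ q - 1 ∧ a4 ≤ q - 1 ∧
  b1 ≤ (n - k) / 2 ∧ b2 ≤ (n - k) / 2 ∧ b3 ≤ n - k - 1 ∧ b4 ≤ n - k - 1

/-- The code `C_nd` for the noisy duplication channel. -/
def Cnd (k n : ℕ) (a c : ℕ → ℕ) (b a1 a2 a3 a4 b1 b2 b3 b4 : ℕ) : Set (List (ZMod q)) :=
  {x | x.length = n ∧ IsIrreducible k x ∧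
    (∀ j ∈ Finset.Icc 1 k,
        gamma (splitk k j (mu k (barPhi k x))) ∈
          CVT (a j) (2 * (gamma (splitk k j (mu k (barPhi k x)))).length + 3)) ∧
    (∀ j ∈ Finset.Icc 1 k,
        wSum (gamma (splitk k j (mu k (barPhi k x)))) %
          (2 * (gamma (splitk k j (mu k (barPhi k x)))).length + 1) = c j) ∧
    ((Finset.Icc 1 k).sum fun j => wt (gamma (splitk k j (mu k (barPhi k x))))) % 5 = b ∧
    splitk 2 1 (inl k (mu k (barPhi k x))) ∈ CTq a1 b1 ((n - k + 1) / 2) ∧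
    splitk 2 2 (inl k (mu k (barPhi k x))) ∈ CTq a2 b2 ((n - k + 1) / 2) ∧
    cusum (inl k (mu k (barPhi k x))) ∈ CTq a3 b3 (n - k) ∧
    inl k (mu k (barPhi k x)) ∈ CTq a4 b4 (n - k)}

/-- `w` is obtained from `u` by deleting one occurrence of the symbol `b`. -/
def delSymb (u w : List (ZMod q)) (b : ZMod q) : Prop :=
  ∃ i, i < u.length ∧ u.getD i 0 = b ∧ w = u.eraseIdx i

/-- `w` is obtained from `u` by inserting the symbol `b` at some position. -/
def insOne (u w : List (ZMod q)) (b : ZMod q) : Prop :=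
  ∃ i, i ≤ u.length ∧ w = u.take i ++ b :: u.drop i

/-- `w` is obtained from `u` by inserting the adjacent pair `b, c`. -/
def insPair (u w : List (ZMod q)) (b c : ZMod q) : Prop :=
  ∃ i, i ≤ u.length ∧ w = u.take i ++ b :: c :: u.drop i

/-- `w` is obtained from `u` by inserting two `0`s separated by exactly one
(unchanged) symbol of `u`. -/
def insSpread0 (u w : List (ZMod q)) : Prop :=
  ∃ i, i < u.length ∧ w = u.take i ++ 0 :: u.getD i 0 :: 0 :: u.drop (i + 1)

/-- `w` is obtained from `u` by inserting a nonzero `a` and replacing the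
symbol `c` immediately following the insertion point by `c - a`. -/
def insSub (u w : List (ZMod q)) : Prop :=
  ∃ a : ZMod q, a ≠ 0 ∧ ∃ i, i < u.length ∧
    w = u.take i ++ a :: (u.getD i 0 - a) :: u.drop (i + 1)

/-- `w` is obtained from `u` by replacing a single symbol `0` by a nonzero symbol. -/
def subOne (u w : List (ZMod q)) : Prop :=
  ∃ i, i < u.length ∧ u.getD i 0 = 0 ∧ ∃ a : ZMod q, a ≠ 0 ∧ w = u.set i a

/-- `w` is obtained from `u` by replacing two adjacent symbols `0, c` by
`a, c - a` for some nonzero `a`. -/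
def subTwo (u w : List (ZMod q)) : Prop :=
  ∃ i, i + 1 < u.length ∧ u.getD i 0 = 0 ∧ ∃ a : ZMod q, a ≠ 0 ∧
    w = u.take i ++ a :: (u.getD (i + 1) 0 - a) :: u.drop (i + 2)

/-- `w` is obtained from `u` by swapping an adjacent pair `b, 0` (with `b ≠ 0`)
into `0, b`. -/
def swapPair (u w : List (ZMod q)) : Prop :=
  ∃ i, i + 1 < u.length ∧ u.getD i 0 ≠ 0 ∧ u.getD (i + 1) 0 = 0 ∧
    w = u.take i ++ 0 :: u.getD i 0 :: u.drop (i + 2)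

/-- `w` is obtained from `u` by deleting a single symbol. -/
def delQ (u w : List (ZMod q)) : Prop := ∃ i, i < u.length ∧ w = u.eraseIdx i

/-- `w` is obtained from `u` by inserting a single symbol. -/
def insQ (u w : List (ZMod q)) : Prop :=
  ∃ (i : ℕ) (b : ZMod q), i ≤ u.length ∧ w = u.take i ++ b :: u.drop i

end NoisyDup

open scoped Finset

lemma List.countP_range_mod_eq_card (k L r : ℕ) :
    (List.range L).countP (fun i => i % k == r) = #{i ∈ Finset.range L | i % k = r} := by
  rw [← Nat.count_eq_card_filter_range, Nat.count]
  congr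

lemma List.countP_range_mod_le {k : ℕ} (hk : 0 < k) (L r : ℕ) :
    (List.range L).countP (fun i => i % k == r) ≤ (L + k - 1) / k := by
  have hmaps :
      ∀ i ∈ {i ∈ Finset.range L | i % k = r}, i / k ∈ Finset.range ((L + k - 1) / k) := by
    intro i hi
    rw [Finset.mem_filter, Finset.mem_range] at hi
    rw [Finset.mem_range, Nat.lt_iff_add_one_le, Nat.le_div_iff_mul_le hk, add_one_mul]
    have := Nat.div_mul_le_self i k
    omega
  have hinj : Set.InjOn (· / k) ({i ∈ Finset.range L | i % k = r} : Finset ℕ) := by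
    intro a ha b hb hab
    simp only [Finset.coe_filter, Set.mem_ofPred_eq] at ha hb
    rw [← Nat.div_add_mod a k, ← Nat.div_add_mod b k, ha.2, hb.2]
    simp only at hab
    rw [hab]
  calc (List.range L).countP (fun i => i % k == r) = #{i ∈ Finset.range L | i % k = r} :=
        countP_range_mod_eq_card k L r
    _ ≤ #(Finset.range ((L + k - 1) / k)) := Finset.card_le_card_of_injOn _ hmaps hinj
    _ = (L + k - 1) / k := Finset.card_range _

lemma Set.exists_le_ncard_fiber {α β : Type*} {S : Set α} (hS : S.Finite) {t : Finset β}
    {f : α → β} (hf : ∀ x ∈ S, f x ∈ t) (ht : t.Nonempty) {D : ℕ} (hD : #t ≤ D) :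
    ∃ y ∈ t, (S.ncard : ℝ) / D ≤ {x ∈ S | f x = y}.ncard := by
  classical
  have hDpos : (0 : ℝ) < D := by exact_mod_cast ht.card_pos.trans_le hD
  obtain ⟨y, hy, hle⟩ := Finset.exists_le_card_fiber_of_nsmul_le_card_of_maps_to
    (s := hS.toFinset) (b := (S.ncard : ℝ) / D) (by simpa using hf) ht (by
      rw [nsmul_eq_mul, ← Set.ncard_eq_toFinset_card S hS, mul_div_assoc', div_le_iff₀ hDpos,
        mul_comm]
      exact mul_le_mul_of_nonneg_left (by exact_mod_cast hD) (Nat.cast_nonneg _))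
  refine ⟨y, hy, hle.trans_eq ?_⟩
  rw [← Set.ncard_coe_finset]
  congr
  ext
  simp

namespace NoisyDup

variable {q : ℕ}

lemma splitk_length (k j : ℕ) (u : List (ZMod q)) :
    (splitk k j u).length = (List.range u.length).countP (fun i => i % k == j - 1) := by
  rw [splitk, List.length_map, ← List.countP_eq_length_filter, List.countP_map,
    List.range_eq_range', ← List.zipIdx_map_snd 0 u, List.countP_map]
  rfl

lemma inl_length_le (k : ℕ) (u : List (ZMod q)) : (inl k u).length ≤ u.length := by
  calc (inl k u).length = ∑ j ∈ Finset.range k, #{i ∈ Finset.range u.length | i % k = j} := by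
        simp only [inl, List.length_flatten, List.map_map, Function.comp_def, splitk_length,
          countP_range_mod_eq_card, Nat.add_sub_cancel]
        simp [Finset.sum, Multiset.range]
    _ = #{i ∈ Finset.range u.length | i % k ∈ Finset.range k} :=
        Finset.sum_card_fiberwise_eq_card_filter _ _ _
    _ ≤ u.length := (Finset.card_filter_le _ _).trans (Finset.card_range _).le

lemma muAux_length_le (k : ℕ) (z : List (ZMod q)) (cnt : ℕ) :
    (muAux k cnt z).length ≤ cnt % k + z.length := by
  induction z generalizing cnt with
  | nil => simp [muAux]
  | cons a t ih =>
    rw [muAux]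
    split
    · have := ih (cnt + 1)
      have : (cnt + 1) % k ≤ cnt % k + 1 := by
        rw [Nat.add_mod]
        exact (Nat.mod_le _ _).trans (Nat.add_le_add_left (Nat.mod_le _ _) _)
      simp only [List.length_cons]
      omega
    · have := ih 0
      simp only [List.length_append, List.length_replicate, List.length_cons,
        Nat.zero_mod] at this ⊢
      omega

lemma mu_length_le (k : ℕ) (z : List (ZMod q)) : (mu k z).length ≤ z.length := by
  simpa [mu] using muAux_length_le k z 0

def sSeq (k j : ℕ) (x : List (ZMod q)) : List Bool := gamma (splitk k j (mu k (barPhi k x)))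

def inlMu (k : ℕ) (x : List (ZMod q)) : List (ZMod q) := inl k (mu k (barPhi k x))

section Lengths

variable {k n : ℕ} {x : List (ZMod q)}

lemma mu_barPhi_length_le (hx : x.length = n) : (mu k (barPhi k x)).length ≤ n - k := by
  simpa [barPhi, hx] using mu_length_le k (barPhi k x)

lemma sSeq_length_le (j : ℕ) (hx : x.length = n) : (sSeq k j x).length ≤ sLen k n j := by
  rw [sSeq, gamma, List.length_map, splitk_length, sLen]
  exact (List.range_sublist.2 (mu_barPhi_length_le hx)).countP_le

lemma inlMu_length_le (hx : x.length = n) : (inlMu k x).length ≤ n - k :=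
  (inl_length_le k _).trans (mu_barPhi_length_le hx)

lemma splitk_two_inlMu_length_le (j : ℕ) (hx : x.length = n) :
    (splitk 2 j (inlMu k x)).length ≤ (n - k + 1) / 2 := by
  rw [splitk_length]
  exact (countP_range_mod_le two_pos _ _).trans
    (Nat.div_le_div_right (by have := inlMu_length_le (k := k) hx; omega))

end Lengths

def vtSyndrome (s : List Bool) : ℕ × ℕ :=
  (vtSum s % (2 * s.length + 3), wSum s % (2 * s.length + 1))

def tenengoltsSyndrome (m : ℕ) (z : List (ZMod q)) : ℕ × ℕ :=
  ((z.map ZMod.val).sum % q, tqSum z % m)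

lemma vtSyndrome_mem {s : List Bool} {L : ℕ} (hs : s.length ≤ L) :
    vtSyndrome s ∈ Finset.range (2 * L + 3) ×ˢ Finset.range (2 * L + 1) := by
  have := Nat.mod_lt (vtSum s) (show 0 < 2 * s.length + 3 by omega)
  have := Nat.mod_lt (wSum s) (show 0 < 2 * s.length + 1 by omega)
  simp only [vtSyndrome, Finset.mem_product, Finset.mem_range]
  omega

lemma tenengoltsSyndrome_mem (hq : 0 < q) {m : ℕ} (hm : 0 < m) (z : List (ZMod q)) :
    tenengoltsSyndrome m z ∈ Finset.range q ×ˢ Finset.range m :=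
  Finset.mem_product.2
    ⟨Finset.mem_range.2 (Nat.mod_lt _ hq), Finset.mem_range.2 (Nat.mod_lt _ hm)⟩

/-- The parameters `((a_j, c_j))_{j ∈ [1,k]}, b, (ā₁, b̄₁), …, (ā₄, b̄₄)` of `C_nd`. -/
abbrev Syndrome (k : ℕ) : Type :=
  (∀ j ∈ Finset.Icc 1 k, ℕ × ℕ) × ℕ × (ℕ × ℕ) × (ℕ × ℕ) × (ℕ × ℕ) × (ℕ × ℕ)

def syndrome (k n : ℕ) (x : List (ZMod q)) : Syndrome k :=
  (fun j _ => vtSyndrome (sSeq k j x), (∑ j ∈ Finset.Icc 1 k, wt (sSeq k j x)) % 5,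
    tenengoltsSyndrome ((n - k + 1) / 2) (splitk 2 1 (inlMu k x)),
    tenengoltsSyndrome ((n - k + 1) / 2) (splitk 2 2 (inlMu k x)),
    tenengoltsSyndrome (n - k) (cusum (inlMu k x)),
    tenengoltsSyndrome (n - k) (inlMu k x))

def syndromeBox (q k n : ℕ) : Finset (Syndrome k) :=
  (Finset.Icc 1 k).pi
      (fun j => Finset.range (2 * sLen k n j + 3) ×ˢ Finset.range (2 * sLen k n j + 1)) ×ˢ
    Finset.range 5 ×ˢ
    (Finset.range q ×ˢ Finset.range ((n - k + 1) / 2)) ×ˢ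
    (Finset.range q ×ˢ Finset.range ((n - k + 1) / 2)) ×ˢ
    (Finset.range q ×ˢ Finset.range (n - k)) ×ˢ (Finset.range q ×ˢ Finset.range (n - k))

lemma syndrome_mem_syndromeBox {k n : ℕ} (hq : 0 < q) (hn : k < n) {x : List (ZMod q)}
    (hx : x.length = n) : syndrome k n x ∈ syndromeBox q k n := by
  simp only [syndrome, syndromeBox, Finset.mem_product, Finset.mem_pi]
  have hT {m : ℕ} (hm : 0 < m) (z : List (ZMod q)) :=
    Finset.mem_product.1 (tenengoltsSyndrome_mem hq hm z)
  exact ⟨fun j _ => Finset.mem_product.1 (vtSyndrome_mem (sSeq_length_le j hx)),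
    Finset.mem_range.2 (by omega), hT (by omega) _, hT (by omega) _, hT (by omega) _,
    hT (by omega) _⟩

lemma sLen_lt {k n j : ℕ} (hn : k < n) (hj : j ∈ Finset.Icc 1 k) :
    sLen k n j < (n + k - 1) / k := by
  have hk : 0 < k := by simp at hj; omega
  have h := countP_range_mod_le hk (n - k) (j - 1)
  rw [show n - k + k - 1 = n - 1 by omega] at h
  rw [show n + k - 1 = n - 1 + k by omega, Nat.add_div_right _ hk]
  exact Nat.lt_succ_of_le h

lemma card_syndromeBox_le {k n : ℕ} (hn : k < n) :
    #(syndromeBox q k n) ≤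
      5 * q ^ 4 * ((n - k + 1) / 2) ^ 2 * (4 * ((n + k - 1) / k) ^ 2 - 1) ^ k * (n - k) ^ 2 := by
  set M := (n + k - 1) / k
  have hvt : ∏ j ∈ Finset.Icc 1 k, (2 * sLen k n j + 3) * (2 * sLen k n j + 1) ≤
      (4 * M ^ 2 - 1) ^ k := by
    have := Finset.prod_le_pow_card (Finset.Icc 1 k)
      (fun j => (2 * sLen k n j + 3) * (2 * sLen k n j + 1)) (4 * M ^ 2 - 1) fun j hj => by
        have h := sLen_lt hn hj
        have : (sLen k n j + 1) * (sLen k n j + 1) ≤ M * M := Nat.mul_le_mul h h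
        have : (2 * sLen k n j + 3) * (2 * sLen k n j + 1) + 1 =
          4 * ((sLen k n j + 1) * (sLen k n j + 1)) := by ring
        rw [sq]
        omega
    simpa using this
  simp only [syndromeBox, Finset.card_product, Finset.card_pi, Finset.card_range]
  calc _ ≤ (4 * M ^ 2 - 1) ^ k * (5 * (q * ((n - k + 1) / 2) * (q * ((n - k + 1) / 2) *
        (q * (n - k) * (q * (n - k)))))) := by gcongr
    _ = _ := by ring

def vtParam {k : ℕ} (ac : ∀ j ∈ Finset.Icc 1 k, ℕ × ℕ) (j : ℕ) : ℕ × ℕ :=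
  if h : j ∈ Finset.Icc 1 k then ac j h else 0

section Parameters

variable {k n : ℕ} {ac : ∀ j ∈ Finset.Icc 1 k, ℕ × ℕ} {b a1 a2 a3 a4 b1 b2 b3 b4 : ℕ}

lemma admissible_of_mem_syndromeBox
    (hσ : (ac, b, (a1, b1), (a2, b2), (a3, b3), (a4, b4)) ∈ syndromeBox q k n) :
    Admissible q k n (fun j => (vtParam ac j).1) (fun j => (vtParam ac j).2)
      b a1 a2 a3 a4 b1 b2 b3 b4 := by
  simp only [syndromeBox, Finset.mem_product, Finset.mem_pi, Finset.mem_range] at hσ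
  obtain ⟨hac, hb, ⟨ha1, hb1⟩, ⟨ha2, hb2⟩, ⟨ha3, hb3⟩, ⟨ha4, hb4⟩⟩ := hσ
  refine ⟨fun j hj => ?_, fun j hj => ?_, by omega, by omega, by omega, by omega, by omega,
    by omega, by omega, by omega, by omega⟩ <;>
  · have := hac j hj
    simp only [vtParam, dif_pos hj]
    omega

lemma mem_Cnd_of_syndrome_eq {x : List (ZMod q)} (hx : x ∈ Irr k n)
    (h : syndrome k n x = (ac, b, (a1, b1), (a2, b2), (a3, b3), (a4, b4))) :
    x ∈ Cnd k n (fun j => (vtParam ac j).1) (fun j => (vtParam ac j).2)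
      b a1 a2 a3 a4 b1 b2 b3 b4 := by
  obtain ⟨hlen, hirr⟩ := hx
  simp only [syndrome, tenengoltsSyndrome, Prod.mk.injEq] at h
  obtain ⟨rfl, rfl, ⟨rfl, rfl⟩, ⟨rfl, rfl⟩, ⟨rfl, rfl⟩, ⟨rfl, rfl⟩⟩ := h
  refine ⟨hlen, hirr, fun j hj => ?_, fun j hj => ?_, rfl,
    ⟨splitk_two_inlMu_length_le 1 hlen, rfl, rfl⟩, ⟨splitk_two_inlMu_length_le 2 hlen, rfl, rfl⟩,
    ⟨by rw [cusum, List.length_map, List.length_range]; exact inlMu_length_le hlen, rfl, rfl⟩,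
    ⟨inlMu_length_le hlen, rfl, rfl⟩⟩
  · simp only [vtParam, dif_pos hj, vtSyndrome]
    exact ⟨by omega, rfl⟩
  · simp only [vtParam, dif_pos hj, vtSyndrome]
    rfl

end Parameters

lemma finite_Irr [NeZero q] (k n : ℕ) : (Irr (q := q) k n).Finite :=
  (List.finite_length_eq (ZMod q) n).subset fun _ hx => hx.1

lemma Cnd_subset_Irr {k n : ℕ} {a c : ℕ → ℕ} {b a1 a2 a3 a4 b1 b2 b3 b4 : ℕ} :
    Cnd (q := q) k n a c b a1 a2 a3 a4 b1 b2 b3 b4 ⊆ Irr k n :=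
  fun _ hx => ⟨hx.1, hx.2.1⟩

theorem cnd_size_bounds_general
    (q k n : ℕ) (hq : 2 ≤ q) (hn : 2 * k < n) :
    (∀ (a c : ℕ → ℕ) (b a1 a2 a3 a4 b1 b2 b3 b4 : ℕ),
        Admissible q k n a c b a1 a2 a3 a4 b1 b2 b3 b4 →
        (Cnd (q := q) k n a c b a1 a2 a3 a4 b1 b2 b3 b4).ncard ≤
          (Irr (q := q) k n).ncard) ∧
    ∃ (a c : ℕ → ℕ) (b a1 a2 a3 a4 b1 b2 b3 b4 : ℕ),
      Admissible q k n a c b a1 a2 a3 a4 b1 b2 b3 b4 ∧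
      ((Irr (q := q) k n).ncard : ℝ) /
          (5 * (q : ℝ) ^ 4 * (((n - k + 1) / 2 : ℕ) : ℝ) ^ 2 *
            ((4 * ((n + k - 1) / k) ^ 2 - 1 : ℕ) : ℝ) ^ k * ((n - k : ℕ) : ℝ) ^ 2) ≤
        ((Cnd (q := q) k n a c b a1 a2 a3 a4 b1 b2 b3 b4).ncard : ℝ) := by
  have : NeZero q := ⟨by omega⟩
  have hIrr := finite_Irr (q := q) k n
  refine ⟨fun a c b a1 a2 a3 a4 b1 b2 b3 b4 _ => Set.ncard_le_ncard Cnd_subset_Irr hIrr, ?_⟩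
  have hbox {x : List (ZMod q)} (hx : x.length = n) : syndrome k n x ∈ syndromeBox q k n :=
    syndrome_mem_syndromeBox (by omega) (by omega) hx
  obtain ⟨⟨ac, b, ⟨a1, b1⟩, ⟨a2, b2⟩, ⟨a3, b3⟩, ⟨a4, b4⟩⟩, hσ, hfiber⟩ :=
    Set.exists_le_ncard_fiber hIrr (fun x hx => hbox hx.1)
      ⟨_, hbox (List.length_replicate (a := 0))⟩ (card_syndromeBox_le (q := q) (by omega))
  refine ⟨_, _, b, a1, a2, a3, a4, b1, b2, b3, b4, admissible_of_mem_syndromeBox hσ, ?_⟩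
  push_cast at hfiber
  exact hfiber.trans <| Nat.cast_le.2 <| Set.ncard_le_ncard
    (fun x hx => mem_Cnd_of_syndrome_eq hx.1 hx.2) (hIrr.subset Cnd_subset_Irr)

/-- every admissible instance of `C_nd` has size at most `|Irr(n)|`,
and some admissible choice of parameters achieves size at least
`|Irr(n)| / (5 q⁴ ⌈(n-k)/2⌉² (4⌈n/k⌉² - 1)^k (n-k)²)`. -/
theorem cnd_size_bounds
    (q k n : ℕ) (hq : 2 ≤ q) (hk : 1 ≤ k) (hn : 2 * k < n) :
    (∀ (a c : ℕ → ℕ) (b a1 a2 a3 a4 b1 b2 b3 b4 : ℕ),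
        Admissible q k n a c b a1 a2 a3 a4 b1 b2 b3 b4 →
        (Cnd (q := q) k n a c b a1 a2 a3 a4 b1 b2 b3 b4).ncard ≤
          (Irr (q := q) k n).ncard) ∧
    ∃ (a c : ℕ → ℕ) (b a1 a2 a3 a4 b1 b2 b3 b4 : ℕ),
      Admissible q k n a c b a1 a2 a3 a4 b1 b2 b3 b4 ∧
      ((Irr (q := q) k n).ncard : ℝ) /
          (5 * (q : ℝ) ^ 4 * (((n - k + 1) / 2 : ℕ) : ℝ) ^ 2 *
            ((4 * ((n + k - 1) / k) ^ 2 - 1 : ℕ) : ℝ) ^ k * ((n - k : ℕ) : ℝ) ^ 2) ≤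
        ((Cnd (q := q) k n a c b a1 a2 a3 a4 b1 b2 b3 b4).ncard : ℝ) :=
  cnd_size_bounds_general q k n hq hn

end NoisyDup
end

section
/- Let E be the set of single-error operations on binary strings consisting of: (0) the identity (no error); (1) deleting one bit; (2) inserting one bit; (3) flipping one bit; (4) flipping two adjacent bits; (5) replacing one bit by two adjacent bits via 0 → 11 or 1 → 00; (6) inserting the adjacent pair 11 at some position; (7) inserting the adjacent pair 00 at some position; (8) replacing an occurrence of 1 by 010. Then for any integers n ≥ 1, 0 ≤ a ≤ 2(n+1), 0 ≤ b ≤ 4, 0 ≤ c ≤ 2n, and any u, v ∈ C_{(a,b,c)}: if some binary word w can be obtained from u by one operation from E and also obtained from v by one operation from E, then u = v. That is, C_{(a,b,c)} corrects a single occurrence of any of these errors without a priori knowledge of the error type. -/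
namespace BinCode

/-- Hamming weight of a binary string. -/
def wt (u : List Bool) : ℕ := u.count true

/-- The VT syndrome `Σ_{i=1}^{|u|} i·u_i` (positions 1-indexed). -/
def vtSum (u : List Bool) : ℕ := (u.zipIdx.map fun p => if p.1 then p.2 + 1 else 0).sum

/-- `Σ_{i=1}^{|u|} i · (u_1 + ⋯ + u_i)`. -/
def wSum (u : List Bool) : ℕ :=
  ((List.range u.length).map fun i => (i + 1) * wt (u.take (i + 1))).sum

/-- The (variable-length) Varshamov–Tenengolts code `C_VT(α, m)`. -/
def CVT (α m : ℕ) : Set (List Bool) := {z | z.length ≤ m - 1 ∧ vtSum z % m = α}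

/-- The binary code `C_{(a,b,c)} ⊆ {0,1}^n`. -/
def Cabc (n a b c : ℕ) : Set (List Bool) :=
  {u | u.length = n ∧ vtSum u % (2 * n + 3) = a ∧ wt u % 5 = b ∧
    wSum u % (2 * n + 1) = c}

/-- `w` is obtained from `u` by deleting one bit. -/
def delBit (u w : List Bool) : Prop := ∃ i, i < u.length ∧ w = u.eraseIdx i

/-- `w` is obtained from `u` by inserting the bit `b` at some position. -/
def insBitAt (u w : List Bool) (b : Bool) : Prop :=
  ∃ i, i ≤ u.length ∧ w = u.take i ++ b :: u.drop i

/-- `w` is obtained from `u` by inserting one bit. -/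
def insBit (u w : List Bool) : Prop := ∃ b, insBitAt u w b

/-- Flip the bit at 0-based index `i`. -/
def flipAt (u : List Bool) (i : ℕ) : List Bool := u.set i (!(u.getD i false))

/-- `w` is obtained from `u` by flipping one bit. -/
def flip1 (u w : List Bool) : Prop := ∃ i, i < u.length ∧ w = flipAt u i

/-- `w` is obtained from `u` by flipping two adjacent bits. -/
def flip2 (u w : List Bool) : Prop :=
  ∃ i, i + 1 < u.length ∧ w = flipAt (flipAt u i) (i + 1)

/-- `w` is obtained from `u` by replacing one bit by two adjacent bits via
`0 → 11` or `1 → 00`. -/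
def expand1 (u w : List Bool) : Prop :=
  ∃ i, i < u.length ∧
    ((u.getD i false = false ∧ w = u.take i ++ true :: true :: u.drop (i + 1)) ∨
     (u.getD i false = true ∧ w = u.take i ++ false :: false :: u.drop (i + 1)))

/-- `w` is obtained from `u` by inserting the adjacent pair `b b`. -/
def insPair (u w : List Bool) (b : Bool) : Prop :=
  ∃ i, i ≤ u.length ∧ w = u.take i ++ b :: b :: u.drop i

/-- `w` is obtained from `u` by replacing an occurrence of `1` by `010`. -/
def oneTo010 (u w : List Bool) : Prop :=
  ∃ i, i < u.length ∧ u.getD i false = true ∧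
    w = u.take i ++ false :: true :: false :: u.drop (i + 1)


/-- The set `E` of single-error operations: identity, one-bit deletion, one-bit
insertion, one-bit flip, flipping two adjacent bits, `0 → 11` / `1 → 00`,
insertion of an adjacent pair `11` or `00`, and `1 → 010`. -/
def Eall (u w : List Bool) : Prop :=
  w = u ∨ delBit u w ∨ insBit u w ∨ flip1 u w ∨ flip2 u w ∨ expand1 u w ∨
    insPair u w true ∨ insPair u w false ∨ oneTo010 u w

/-!
Every operation of `E` replaces a factor `x` of `u` by a factor `y` of length at most three; the
possible pairs `(x, y)` are listed in `errorRules`. Suppose `u ↦ w` and `v ↦ w` with `|u| = |v|`.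
Length and weight modulo 5 force both rewrites to change the number of `b`s by the same
`Δ_b = countDiff b x y ∈ [-2, 2]`, which pins down the rule except for a few pairs that `vtSum`
separates. For one rule applied at positions `i ≤ j`, write `w = A ++ y ++ G ++ B` with `|A| = i`
and a gap `G` of length `j - i`; then `vtSum u - vtSum v = Δ₀ · #₁G - Δ₁ · #₀G` (`#_b` counting
the `b`s) is smaller than `2n + 3` in absolute value, so it vanishes. If `Δ₀` and `Δ₁` have
opposite signs, the gap is empty. If the rule acts on a run of one symbol, the gap lies in that
run and `u = v` anyway. `1 ↦ 010` cannot recur after an all-zero gap, and the adjacent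
transpositions, which `vtSum` does not see, shift `wSum` by their position.
-/

lemma wt_append (x y : List Bool) : wt (x ++ y) = wt x + wt y := List.count_append

lemma wt_singleton (b : Bool) : wt [b] = b.toNat := by
  cases b <;> rfl

lemma vtSum_append_singleton (x : List Bool) (b : Bool) :
    vtSum (x ++ [b]) = vtSum x + (x.length + 1) * b.toNat := by
  unfold vtSum
  rw [List.zipIdx_append, List.map_append, List.sum_append]
  cases b <;> simp [List.zipIdx]

lemma vtSum_append (x y : List Bool) :
    vtSum (x ++ y) = vtSum x + x.length * wt y + vtSum y := by
  induction y using List.reverseRecOn with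
  | nil => simp [wt, vtSum]
  | append_singleton y b ih =>
    rw [← List.append_assoc, vtSum_append_singleton, ih, vtSum_append_singleton, wt_append,
      wt_singleton, List.length_append]
    ring

lemma wSum_append_singleton (x : List Bool) (b : Bool) :
    wSum (x ++ [b]) = wSum x + (x.length + 1) * wt (x ++ [b]) := by
  simp only [wSum, List.length_append, List.length_singleton, List.range_succ, List.map_append,
    List.sum_append, List.map_singleton, List.sum_singleton]
  congr 2
  · refine List.map_congr_left fun i hi => ?_
    rw [List.take_append_of_le_length (by simp at hi; omega)]
  · exact congrArg wt (List.take_of_length_le (by simp))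

lemma wSum_swap (A B : List Bool) :
    wSum (A ++ [true, false] ++ B) = wSum (A ++ [false, true] ++ B) + A.length + 1 := by
  induction B using List.reverseRecOn with
  | nil =>
    rw [show A ++ [true, false] ++ [] = A ++ [true] ++ [false] by simp,
      show A ++ [false, true] ++ [] = A ++ [false] ++ [true] by simp]
    simp only [wSum_append_singleton, wt_append, wt_singleton, List.length_append,
      List.length_singleton, Bool.toNat_true, Bool.toNat_false]
    ring
  | append_singleton B b ih =>
    simp only [← List.append_assoc] at ih ⊢
    simp only [wSum_append_singleton, ih, wt_append, List.length_append, List.length_cons,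
      show wt [true, false] = wt [false, true] from rfl]
    ring

section Rewrites

variable {α : Type*}

def Rewrites (x y u w : List α) : Prop := ∃ A B, u = A ++ x ++ B ∧ w = A ++ y ++ B

lemma rewrites_take_drop {u : List α} {i : ℕ} (hi : i < u.length) (y : List α) :
    Rewrites [u[i]] y u (u.take i ++ y ++ u.drop (i + 1)) :=
  ⟨u.take i, u.drop (i + 1), by simp, rfl⟩

lemma rewrites_take_drop_two {u : List α} {i : ℕ} (hi : i + 1 < u.length) (y : List α) :
    Rewrites [u[i], u[i + 1]] y u (u.take i ++ y ++ u.drop (i + 2)) :=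
  ⟨u.take i, u.drop (i + 2), by
    simp [← List.drop_eq_getElem_cons hi, ← List.drop_eq_getElem_cons (Nat.lt_of_succ_lt hi)], rfl⟩

lemma rewrites_nil (u : List α) (i : ℕ) (y : List α) :
    Rewrites [] y u (u.take i ++ y ++ u.drop i) :=
  ⟨u.take i, u.drop i, by simp, rfl⟩

def countDiff [DecidableEq α] (b : α) (x y : List α) : ℤ := x.count b - y.count b

lemma count_sub_of_rewrites [DecidableEq α] {x y u w : List α} (h : Rewrites x y u w) (b : α) :
    (u.count b : ℤ) - w.count b = countDiff b x y := by
  obtain ⟨A, B, rfl, rfl⟩ := h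
  simp only [countDiff, List.count_append]
  push_cast
  ring

lemma exists_gap_of_append_eq_append {A₁ A₂ B₁ B₂ y : List α}
    (h : A₁ ++ y ++ B₁ = A₂ ++ y ++ B₂) (hle : A₁.length ≤ A₂.length) :
    ∃ G, B₁ = G ++ B₂ ∧ A₂ ++ y = A₁ ++ y ++ G := by
  rcases List.append_eq_append_iff.mp h with ⟨G, hA, hB⟩ | ⟨G, hA, hB⟩
  · exact ⟨G, hB, hA⟩
  · have hlen := congrArg List.length hA
    simp only [List.length_append] at hlen
    obtain rfl : G = [] := List.eq_nil_of_length_eq_zero (by omega)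
    exact ⟨[], by simpa using hB.symm, by simpa using hA.symm⟩

lemma eq_of_gap_eq_nil {A A' G B x y : List α} (hA : A' ++ y = A ++ y ++ G) (hG : G = []) :
    A ++ x ++ (G ++ B) = A' ++ x ++ B := by
  subst hG
  rw [List.append_nil] at hA
  rw [List.append_cancel_right hA, List.nil_append]

lemma append_comm_of_forall_eq {l₁ l₂ : List α} {c : α} (h₁ : ∀ b ∈ l₁, b = c)
    (h₂ : ∀ b ∈ l₂, b = c) : l₁ ++ l₂ = l₂ ++ l₁ := by
  rw [List.eq_replicate_iff.mpr ⟨rfl, h₁⟩, List.eq_replicate_iff.mpr ⟨rfl, h₂⟩,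
    ← List.replicate_add, ← List.replicate_add, Nat.add_comm]

lemma eq_of_gap_comm {A A' G B x y : List α} (hA : A' ++ y = A ++ y ++ G)
    (hy : y ++ G = G ++ y) (hx : x ++ G = G ++ x) :
    A ++ x ++ (G ++ B) = A' ++ x ++ B := by
  rw [List.append_assoc, hy, ← List.append_assoc] at hA
  rw [List.append_cancel_right hA, List.append_assoc, ← List.append_assoc x, hx]
  simp

end Rewrites

def vtDiff (x y : List Bool) : ℤ := vtSum x - vtSum y

lemma vtSum_append_sub (A B x y : List Bool) :
    (vtSum (A ++ x ++ B) : ℤ) - vtSum (A ++ y ++ B) =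
      A.length * countDiff true x y + vtDiff x y + ((x.length : ℤ) - y.length) * wt B := by
  simp only [vtSum_append, List.length_append, countDiff, vtDiff, wt]
  push_cast
  ring

lemma flipAt_append_cons (A C : List Bool) (a : Bool) :
    flipAt (A ++ a :: C) A.length = A ++ (!a) :: C := by
  simp [flipAt]

lemma flipAt_eq_take_append_drop {u : List Bool} {i : ℕ} (hi : i < u.length) :
    flipAt u i = u.take i ++ [!u[i]] ++ u.drop (i + 1) := by
  have hu : u = u.take i ++ u[i] :: u.drop (i + 1) := by
    rw [← List.drop_eq_getElem_cons hi, List.take_append_drop]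
  have hlen : (u.take i).length = i := List.length_take_of_le hi.le
  calc flipAt u i = flipAt (u.take i ++ u[i] :: u.drop (i + 1)) (u.take i).length := by
        rw [← hu, hlen]
    _ = _ := (flipAt_append_cons _ _ _).trans (by simp)

lemma flipAt_flipAt_succ {u : List Bool} {i : ℕ} (hi : i + 1 < u.length) :
    flipAt (flipAt u i) (i + 1) = u.take i ++ [!u[i], !u[i + 1]] ++ u.drop (i + 2) := by
  have hlen : (u.take i ++ [!u[i]]).length = i + 1 := by simp; omega
  rw [flipAt_eq_take_append_drop (u := u) (i := i) (by omega), List.drop_eq_getElem_cons hi]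
  conv_lhs => arg 2; rw [← hlen]
  exact (flipAt_append_cons _ _ _).trans (by simp)

def errorRules : List (List Bool × List Bool) :=
  [([], []), ([false], []), ([true], []), ([], [false]), ([], [true]),
    ([false], [true]), ([true], [false]),
    ([false, false], [true, true]), ([false, true], [true, false]),
    ([true, false], [false, true]), ([true, true], [false, false]),
    ([false], [true, true]), ([true], [false, false]),
    ([], [true, true]), ([], [false, false]), ([true], [false, true, false])]

lemma exists_mem_errorRules_rewrites {u w : List Bool} (h : Eall u w) :
    ∃ r ∈ errorRules, Rewrites r.1 r.2 u w := by
  rcases h with rfl | ⟨i, hi, rfl⟩ | ⟨b, i, hi, rfl⟩ | ⟨i, hi, rfl⟩ | ⟨i, hi, rfl⟩ |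
    ⟨i, hi, ⟨hb, rfl⟩ | ⟨hb, rfl⟩⟩ | ⟨i, hi, rfl⟩ | ⟨i, hi, rfl⟩ | ⟨i, hi, hb, rfl⟩
  · exact ⟨([], []), by decide, [], w, by simp, by simp⟩
  · refine ⟨([u[i]], []), ?_,
      by simpa [List.eraseIdx_eq_take_drop_succ] using rewrites_take_drop hi []⟩
    cases u[i] <;> decide
  · refine ⟨([], [b]), ?_, by simpa using rewrites_nil u i [b]⟩
    cases b <;> decide
  · refine ⟨([u[i]], [!u[i]]), ?_,
      by simpa [flipAt_eq_take_append_drop hi] using rewrites_take_drop hi [!u[i]]⟩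
    cases u[i] <;> decide
  · refine ⟨([u[i], u[i + 1]], [!u[i], !u[i + 1]]), ?_,
      flipAt_flipAt_succ hi ▸ rewrites_take_drop_two hi _⟩
    cases u[i] <;> cases u[i + 1] <;> decide
  · rw [List.getD_eq_getElem _ _ hi] at hb
    exact ⟨([false], [true, true]), by decide,
      by simpa [hb] using rewrites_take_drop hi [true, true]⟩
  · rw [List.getD_eq_getElem _ _ hi] at hb
    exact ⟨([true], [false, false]), by decide,
      by simpa [hb] using rewrites_take_drop hi [false, false]⟩
  · exact ⟨([], [true, true]), by decide, by simpa using rewrites_nil u i [true, true]⟩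
  · exact ⟨([], [false, false]), by decide, by simpa using rewrites_nil u i [false, false]⟩
  · rw [List.getD_eq_getElem _ _ hi] at hb
    exact ⟨([true], [false, true, false]), by decide,
      by simpa [hb] using rewrites_take_drop hi [false, true, false]⟩

lemma errorRules_abs_countDiff_le : ∀ r ∈ errorRules, ∀ b, |countDiff b r.1 r.2| ≤ 2 := by
  decide

lemma errorRules_cases : ∀ r ∈ errorRules,
    countDiff false r.1 r.2 * countDiff true r.1 r.2 < 0 ∨ (∃ c, ∀ b ∈ r.1 ++ r.2, b = c) ∨
      r = ([false, true], [true, false]) ∨ r = ([true, false], [false, true]) ∨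
      r = ([true], [false, true, false]) := by
  decide

lemma errorRules_eq_of_countDiff_eq : ∀ r₁ ∈ errorRules, ∀ r₂ ∈ errorRules,
    (∀ b, countDiff b r₁.1 r₁.2 = countDiff b r₂.1 r₂.2) →
      r₁ = r₂ ∨
      ((∀ b, countDiff b r₁.1 r₁.2 = 0) ∧ vtDiff r₁.1 r₁.2 ≠ vtDiff r₂.1 r₂.2 ∧
        |vtDiff r₁.1 r₁.2 - vtDiff r₂.1 r₂.2| ≤ 2) ∨
      (r₁ = ([], [false, false]) ∧ r₂ = ([true], [false, true, false])) ∨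
      (r₁ = ([true], [false, true, false]) ∧ r₂ = ([], [false, false])) := by
  decide

lemma vtSum_sub_of_gap {A A' G B x y : List Bool} (hA : A' ++ y = A ++ y ++ G) :
    (vtSum (A ++ x ++ (G ++ B)) : ℤ) - vtSum (A' ++ x ++ B) =
      countDiff false x y * G.count true - countDiff true x y * G.count false := by
  have hvt := congrArg vtSum hA
  have hlen := congrArg List.length hA
  simp only [vtSum_append, wt, List.count_append, List.length_append] at hvt hlen ⊢
  have hx := List.count_true_add_count_false x
  have hy := List.count_true_add_count_false y
  have hG := List.count_true_add_count_false G
  simp only [countDiff]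
  zify at hvt hlen hx hy hG
  push_cast
  linear_combination (-1 : ℤ) * hvt
    + ((y.count true : ℤ) - x.count true - B.count true) * hlen
    + ((x.count true : ℤ) - y.count true) * hG + (G.count true : ℤ) * hy - (G.count true : ℤ) * hx

lemma countDiff_mul_eq_of_gap {A A' G B x y : List Bool} {m : ℕ} (hA : A' ++ y = A ++ y ++ G)
    (hxy : ∀ b, |countDiff b x y| ≤ 2) (hm : 2 * G.length < m)
    (h : vtSum (A ++ x ++ (G ++ B)) ≡ vtSum (A' ++ x ++ B) [MOD m]) :
    countDiff false x y * G.count true = countDiff true x y * G.count false := by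
  have hdvd := h.symm.dvd
  rw [vtSum_sub_of_gap hA] at hdvd
  have hG := List.count_true_add_count_false G
  have hle := abs_sub (countDiff false x y * G.count true) (countDiff true x y * G.count false)
  rw [abs_mul, abs_mul, Nat.abs_cast, Nat.abs_cast] at hle
  have := Int.eq_zero_of_abs_lt_dvd hdvd (by
    zify at hm hG
    nlinarith [hxy false, hxy true, (G.count true).cast_nonneg (α := ℤ),
      (G.count false).cast_nonneg (α := ℤ)])
  linarith

lemma eq_zero_of_mul_eq_of_mul_neg {a b s t : ℤ} (hab : a * b < 0) (hs : 0 ≤ s) (ht : 0 ≤ t)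
    (h : a * s = b * t) : s = 0 ∧ t = 0 := by
  rcases mul_neg_iff.mp hab with ⟨ha, hb⟩ | ⟨ha, hb⟩ <;> constructor <;> nlinarith

lemma gap_eq_nil_of_mul_neg {G x y : List Bool}
    (hxy : countDiff false x y * countDiff true x y < 0)
    (hbal : countDiff false x y * G.count true = countDiff true x y * G.count false) :
    G = [] := by
  obtain ⟨ht, hf⟩ := eq_zero_of_mul_eq_of_mul_neg hxy (by positivity) (by positivity) hbal
  exact List.eq_nil_of_length_eq_zero (by rw [← List.count_true_add_count_false G]; omega)

lemma forall_eq_of_run {G x y : List Bool} {c : Bool} (hxy : ∀ b ∈ x ++ y, b = c) (hne : x ≠ y)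
    (hbal : countDiff false x y * G.count true = countDiff true x y * G.count false) :
    ∀ b ∈ G, b = c := by
  have hx : x = List.replicate x.length c :=
    List.eq_replicate_iff.mpr ⟨rfl, fun b hb => hxy b (List.mem_append_left _ hb)⟩
  have hy : y = List.replicate y.length c :=
    List.eq_replicate_iff.mpr ⟨rfl, fun b hb => hxy b (List.mem_append_right _ hb)⟩
  have hlen : x.length ≠ y.length := fun h => hne (by rw [hx, hy, h])
  rw [hx, hy] at hbal
  have hG : G.count (!c) = 0 := by
    cases c <;> simpa [countDiff, List.count_replicate, sub_eq_zero, hlen] using hbal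
  intro b hb
  by_contra hbc
  exact List.count_eq_zero.mp hG (Bool.eq_not_iff.mpr hbc ▸ hb)

lemma gap_eq_nil_of_oneTo010 {A A' G : List Bool}
    (hA : A' ++ [false, true, false] = A ++ [false, true, false] ++ G) (hG : G.count true = 0) :
    G = [] := by
  have hrep : G = List.replicate G.length false :=
    List.eq_replicate_iff.mpr ⟨rfl, fun b hb => by
      cases b
      · rfl
      · exact absurd hb (List.count_eq_zero.mp hG)⟩
  by_contra hne
  obtain ⟨D, hD⟩ : ∃ D, G.length = D + 1 := Nat.exists_eq_succ_of_ne_zero (by simpa using hne)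
  have hG' : false :: G = List.replicate D false ++ [false, false] := by
    rw [hrep, hD, ← List.replicate_succ]
    exact List.replicate_add D 2 false
  have e : (A' ++ [false]) ++ [true, false] =
      (A ++ [false, true] ++ List.replicate D false) ++ [false, false] := by
    rw [List.append_assoc, List.singleton_append, hA, List.append_assoc _ _ [false, false], ← hG']
    simp
  simpa using (List.append_inj' e rfl).2

lemma gap_eq_nil_of_swap {A A' G B x y : List Bool} {m : ℕ}
    (hxy : (x = [false, true] ∧ y = [true, false]) ∨ (x = [true, false] ∧ y = [false, true]))
    (hA : A' ++ y = A ++ y ++ G) (hm : G.length < m)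
    (h : wSum (A ++ x ++ (G ++ B)) ≡ wSum (A' ++ x ++ B) [MOD m]) : G = [] := by
  have hlen := congrArg List.length hA
  simp only [List.length_append] at hlen
  have hw : A ++ y ++ (G ++ B) = A' ++ y ++ B := by simp [hA]
  have key : wSum (A ++ x ++ (G ++ B)) = wSum (A' ++ x ++ B) + G.length ∨
      wSum (A' ++ x ++ B) = wSum (A ++ x ++ (G ++ B)) + G.length := by
    have e₁ := wSum_swap A (G ++ B)
    have e₂ := wSum_swap A' B
    rcases hxy with ⟨rfl, rfl⟩ | ⟨rfl, rfl⟩ <;> rw [hw] at e₁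
    · left; omega
    · right; omega
  have hG : G.length ≡ 0 [MOD m] := by
    rcases key with e | e <;> rw [e] at h
    · exact Nat.ModEq.add_left_cancel' (wSum (A' ++ x ++ B)) (by simpa using h)
    · exact Nat.ModEq.add_left_cancel' (wSum (A ++ x ++ (G ++ B))) (by simpa using h.symm)
  exact List.eq_nil_of_length_eq_zero (hG.eq_of_lt_of_lt hm (by omega))

theorem eq_of_rewrites_of_modEq {x y u v w : List Bool} {m m' : ℕ} (hr : (x, y) ∈ errorRules)
    (hu : Rewrites x y u w) (hv : Rewrites x y v w) (hm : 2 * u.length < m)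
    (hm' : u.length < m') (hvt : vtSum u ≡ vtSum v [MOD m]) (hws : wSum u ≡ wSum v [MOD m']) :
    u = v := by
  obtain ⟨A₁, B₁, rfl, hw₁⟩ := hu
  obtain ⟨A₂, B₂, rfl, hw₂⟩ := hv
  wlog hle : A₁.length ≤ A₂.length generalizing A₁ B₁ A₂ B₂
  · have hlen := congrArg List.length (hw₁.symm.trans hw₂)
    simp only [List.length_append] at hm hm' hlen
    exact (this A₂ B₂ hw₂ (by simp only [List.length_append]; omega)
      (by simp only [List.length_append]; omega) A₁ B₁ hw₁ hvt.symm hws.symm (by omega)).symm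
  obtain ⟨G, rfl, hA⟩ := exists_gap_of_append_eq_append (hw₁.symm.trans hw₂) hle
  simp only [List.length_append] at hm hm'
  have hbal := countDiff_mul_eq_of_gap hA (errorRules_abs_countDiff_le (x, y) hr)
    (show 2 * G.length < m by omega) hvt
  rcases errorRules_cases (x, y) hr with hneg | ⟨c, hc⟩ | hswap | hswap | h010
  · exact eq_of_gap_eq_nil hA (gap_eq_nil_of_mul_neg hneg hbal)
  · by_cases hxy : x = y
    · subst hxy
      exact hw₁.symm.trans hw₂
    · have hGc := forall_eq_of_run hc hxy hbal
      exact eq_of_gap_comm hA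
        (append_comm_of_forall_eq (fun b hb => hc b (List.mem_append_right _ hb)) hGc)
        (append_comm_of_forall_eq (fun b hb => hc b (List.mem_append_left _ hb)) hGc)
  · obtain ⟨rfl, rfl⟩ := Prod.mk.inj hswap
    exact eq_of_gap_eq_nil hA (gap_eq_nil_of_swap (Or.inl ⟨rfl, rfl⟩) hA (by omega) hws)
  · obtain ⟨rfl, rfl⟩ := Prod.mk.inj hswap
    exact eq_of_gap_eq_nil hA (gap_eq_nil_of_swap (Or.inr ⟨rfl, rfl⟩) hA (by omega) hws)
  · obtain ⟨rfl, rfl⟩ := Prod.mk.inj h010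
    exact eq_of_gap_eq_nil hA (gap_eq_nil_of_oneTo010 hA (by simpa [countDiff] using hbal))

lemma countDiff_eq_of_rewrites {x₁ y₁ x₂ y₂ u v w : List Bool} (hu : Rewrites x₁ y₁ u w)
    (hv : Rewrites x₂ y₂ v w) (hlen : u.length = v.length) (hwt : wt u ≡ wt v [MOD 5])
    (h₁ : ∀ b, |countDiff b x₁ y₁| ≤ 2) (h₂ : ∀ b, |countDiff b x₂ y₂| ≤ 2) (b : Bool) :
    countDiff b x₁ y₁ = countDiff b x₂ y₂ := by
  have hu' := count_sub_of_rewrites hu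
  have hv' := count_sub_of_rewrites hv
  have ht : countDiff true x₁ y₁ = countDiff true x₂ y₂ := by
    have hdvd : (5 : ℤ) ∣ countDiff true x₁ y₁ - countDiff true x₂ y₂ := by
      rw [← hu', ← hv']
      simpa [wt] using hwt.symm.dvd
    have := Int.eq_zero_of_abs_lt_dvd hdvd (by
      have := abs_le.mp (h₁ true); have := abs_le.mp (h₂ true); rw [abs_lt]; omega)
    linarith
  have hcu := List.count_true_add_count_false u
  have hcv := List.count_true_add_count_false v
  cases b
  · linarith [hu' true, hv' true, hu' false, hv' false]
  · exact ht

lemma vtSum_sub_of_rewrites_of_countDiff_eq_zero {x y u w : List Bool} (h : Rewrites x y u w)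
    (hxy : ∀ b, countDiff b x y = 0) : (vtSum u : ℤ) - vtSum w = vtDiff x y := by
  obtain ⟨A, B, rfl, rfl⟩ := h
  have hlen : (x.length : ℤ) - y.length = 0 := by
    have ht := hxy true
    have hf := hxy false
    rw [← List.count_true_add_count_false x, ← List.count_true_add_count_false y]
    simp only [countDiff] at ht hf
    push_cast
    linarith
  rw [vtSum_append_sub, hxy true, hlen]
  ring

lemma false_of_rewrites_of_vtDiff_ne {x₁ y₁ x₂ y₂ u v w : List Bool} {m : ℕ}
    (hu : Rewrites x₁ y₁ u w) (hv : Rewrites x₂ y₂ v w) (h₁ : ∀ b, countDiff b x₁ y₁ = 0)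
    (h₂ : ∀ b, countDiff b x₂ y₂ = 0) (hne : vtDiff x₁ y₁ ≠ vtDiff x₂ y₂)
    (hle : |vtDiff x₁ y₁ - vtDiff x₂ y₂| ≤ 2) (hm : 2 < m) (hvt : vtSum u ≡ vtSum v [MOD m]) :
    False := by
  have hdvd := hvt.symm.dvd
  rw [show (vtSum u : ℤ) - vtSum v = vtDiff x₁ y₁ - vtDiff x₂ y₂ by
    linarith [vtSum_sub_of_rewrites_of_countDiff_eq_zero hu h₁,
      vtSum_sub_of_rewrites_of_countDiff_eq_zero hv h₂]] at hdvd
  exact hne (sub_eq_zero.mp (Int.eq_zero_of_abs_lt_dvd hdvd (by omega)))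

lemma false_of_rewrites_insPair_oneTo010 {u v w : List Bool} {m : ℕ}
    (hu : Rewrites [] [false, false] u w) (hv : Rewrites [true] [false, true, false] v w)
    (hmu : 2 * u.length < m) (hmv : 2 * v.length < m) (hvt : vtSum u ≡ vtSum v [MOD m]) :
    False := by
  obtain ⟨A₁, B₁, rfl, rfl⟩ := hu
  obtain ⟨A₂, B₂, rfl, hw⟩ := hv
  have hwu := vtSum_append_sub A₁ B₁ [] [false, false]
  have hwv := vtSum_append_sub A₂ B₂ [true] [false, true, false]
  rw [← hw] at hwv
  have e₁ : countDiff true [] [false, false] = 0 ∧ vtDiff [] [false, false] = 0 := by decide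
  have e₂ : countDiff true [true] [false, true, false] = 0 ∧
      vtDiff [true] [false, true, false] = -1 := by decide
  simp only [e₁, e₂, List.length_cons, List.length_nil] at hwu hwv
  push_cast at hwu hwv
  have hB₁ : wt B₁ ≤ B₁.length := List.count_le_length
  have hB₂ : wt B₂ ≤ B₂.length := List.count_le_length
  simp only [List.length_append, List.length_nil, List.length_singleton] at hmu hmv
  have hdvd := hvt.symm.dvd
  rw [show (vtSum (A₁ ++ [] ++ B₁) : ℤ) - vtSum (A₂ ++ [true] ++ B₂) =
    1 + 2 * wt B₂ - 2 * wt B₁ by linarith] at hdvd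
  have := Int.eq_zero_of_abs_lt_dvd hdvd (by rw [abs_lt]; omega)
  omega

theorem code_abc_corrects_all_general
    (n a b c : ℕ)
    (u v : List Bool) (hu : u ∈ Cabc n a b c) (hv : v ∈ Cabc n a b c)
    (w : List Bool) (hw1 : Eall u w) (hw2 : Eall v w) : u = v := by
  obtain ⟨hlu, hvtu, hwtu, hwsu⟩ := hu
  obtain ⟨hlv, hvtv, hwtv, hwsv⟩ := hv
  have hvt : vtSum u ≡ vtSum v [MOD 2 * n + 3] := hvtu.trans hvtv.symm
  obtain ⟨r₁, hr₁, hu⟩ := exists_mem_errorRules_rewrites hw1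
  obtain ⟨r₂, hr₂, hv⟩ := exists_mem_errorRules_rewrites hw2
  have hcount := countDiff_eq_of_rewrites hu hv (hlu.trans hlv.symm) (hwtu.trans hwtv.symm)
    (errorRules_abs_countDiff_le r₁ hr₁) (errorRules_abs_countDiff_le r₂ hr₂)
  rcases errorRules_eq_of_countDiff_eq r₁ hr₁ r₂ hr₂ hcount with
    rfl | ⟨hbal, hne, hle⟩ | ⟨rfl, rfl⟩ | ⟨rfl, rfl⟩
  · exact eq_of_rewrites_of_modEq hr₁ hu hv (by omega) (by omega) hvt (hwsu.trans hwsv.symm)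
  · exact (false_of_rewrites_of_vtDiff_ne hu hv hbal (fun b => hcount b ▸ hbal b) hne hle
      (by omega) hvt).elim
  · exact (false_of_rewrites_insPair_oneTo010 hu hv (by omega) (by omega) hvt).elim
  · exact (false_of_rewrites_insPair_oneTo010 hv hu (by omega) (by omega) hvt.symm).elim

/-- `C_{(a,b,c)}` corrects any single occurrence of an error from
`E`, without a priori knowledge of the error type. -/
theorem code_abc_corrects_all
    (n a b c : ℕ) (hn : 1 ≤ n) (ha : a ≤ 2 * (n + 1)) (hb : b ≤ 4) (hc : c ≤ 2 * n)
    (u v : List Bool) (hu : u ∈ Cabc n a b c) (hv : v ∈ Cabc n a b c)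
    (w : List Bool) (hw1 : Eall u w) (hw2 : Eall v w) : u = v :=
  code_abc_corrects_all_general n a b c u v hu hv w hw1 hw2

end BinCode
end

section
/- Let E₀ be the set of length-preserving operations on binary strings consisting of: the identity, flipping one bit, and flipping two adjacent bits (this includes the adjacent transposition 10 ↔ 01 as well as 00 → 11 and 11 → 00). Then for any integers n ≥ 1, 0 ≤ a ≤ 2(n+1), 0 ≤ b ≤ 4, 0 ≤ c ≤ 2n, and any u, v ∈ C_{(a,b,c)}: if some binary word w ∈ {0,1}^n can be obtained from u by one operation from E₀ and also obtained from v by one operation from E₀, then u = v. -/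
namespace BinCode

/-- The set `E₀` of length-preserving operations: identity, flipping one bit,
and flipping two adjacent bits. -/
def E0 (u w : List Bool) : Prop := w = u ∨ flip1 u w ∨ flip2 u w

/-!
A step of `E₀` rewrites a window of at most two bits starting at (0-based) position `p`. It
changes the weight by some `δ ∈ [-2, 2]` and the VT syndrome by `δ p` plus a constant of the
step; a transposition (`δ = 0`) also changes `Σ i (u₁ + ⋯ + uᵢ)` by `∓(p + 1)`. Two weight changes
differ by less than `5`, and for equal `δ` the other changes differ by less than `2n + 3` and
`2n + 1`. So if two codewords reach the same word, both steps are the same rewrite at the same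
position, and undoing it gives `u = v`.
-/

lemma eq_of_modEq_of_abs_sub_lt {m a b : ℤ} (h : a ≡ b [ZMOD m]) (hab : |a - b| < m) : a = b :=
  (sub_eq_zero.1 (Int.eq_zero_of_abs_lt_dvd h.dvd (by rwa [abs_sub_comm]))).symm

lemma sum_map_zipIdx_eq (l : List Bool) (k : ℕ) :
    ((l.zipIdx k).map fun p => if p.1 then p.2 + 1 else 0).sum = k * wt l + vtSum l := by
  induction l generalizing k with
  | nil => simp [vtSum, wt]
  | cons c l ih =>
    rw [vtSum, List.zipIdx_cons, List.zipIdx_cons, List.map_cons, List.map_cons, List.sum_cons,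
      List.sum_cons, ih, ih]
    cases c <;> simp [wt] <;> ring

def prefixWtSum (u : List Bool) : ℕ := ((List.range u.length).map fun i => wt (u.take (i + 1))).sum

lemma sum_range_map_take_append (x y : List Bool) (f : ℕ → List Bool → ℕ) :
    ((List.range (x ++ y).length).map fun i => f i ((x ++ y).take (i + 1))).sum =
      ((List.range x.length).map fun i => f i (x.take (i + 1))).sum +
      ((List.range y.length).map fun i => f (x.length + i) (x ++ y.take (i + 1))).sum := by
  rw [List.length_append, List.range_add, List.map_append, List.sum_append, List.map_map]
  congr 1
  · refine congrArg List.sum (List.map_congr_left fun i hi => ?_)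
    rw [List.take_append_of_le_length (List.mem_range.1 hi)]
  · refine congrArg List.sum (List.map_congr_left fun i _ => ?_)
    rw [Function.comp, Nat.add_assoc, List.take_length_add_append]

lemma wSum_append (x y : List Bool) :
    wSum (x ++ y) = wSum x + wt x * ((List.range y.length).map fun i => x.length + i + 1).sum +
      x.length * prefixWtSum y + wSum y := by
  rw [wSum, sum_range_map_take_append x y fun i z => (i + 1) * wt z]
  have hsplit : ∀ i, (x.length + i + 1) * wt (x ++ y.take (i + 1)) =
      wt x * (x.length + i + 1) + x.length * wt (y.take (i + 1)) + (i + 1) * wt (y.take (i + 1)) :=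
    fun i => by rw [wt_append]; ring
  simp only [hsplit, List.sum_map_add, List.sum_map_mul_left]
  rw [wSum, wSum, prefixWtSum]
  ring

inductive Edit
  | keep | set | clear | setPair | clearPair | swapRight | swapLeft

namespace Edit

def src : Edit → List Bool
  | keep => []
  | set => [false]
  | clear => [true]
  | setPair => [false, false]
  | clearPair => [true, true]
  | swapRight => [true, false]
  | swapLeft => [false, true]

def tgt : Edit → List Bool
  | keep => []
  | set => [true]
  | clear => [false]
  | setPair => [true, true]
  | clearPair => [false, false]
  | swapRight => [false, true]
  | swapLeft => [true, false]

lemma length_tgt (e : Edit) : e.tgt.length = e.src.length := by cases e <;> rfl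

def wtShift (e : Edit) : ℤ := wt e.tgt - wt e.src

def vtShift (e : Edit) (p : ℕ) : ℤ := e.wtShift * p + (vtSum e.tgt - vtSum e.src)

def wShift (e : Edit) (p : ℕ) : ℤ :=
  (prefixWtSum e.tgt - prefixWtSum e.src : ℤ) * p + (wSum e.tgt - wSum e.src)

lemma abs_wtShift_sub_lt (e e' : Edit) : |e.wtShift - e'.wtShift| < 5 := by
  rw [abs_lt]
  cases e <;> cases e' <;> simp [wtShift, src, tgt, wt]

variable {e e' : Edit} {n p p' : ℕ}

lemma abs_vtShift_sub_lt (hw : e.wtShift = e'.wtShift) (hp : p + e.src.length ≤ n)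
    (hp' : p' + e'.src.length ≤ n) : |e.vtShift p - e'.vtShift p'| < 2 * n + 3 := by
  rw [abs_lt]
  cases e <;> cases e' <;> simp [vtShift, wtShift, src, tgt, wt, vtSum] at hw hp hp' ⊢ <;> omega

lemma eq_of_vtShift_eq (hw : e.wtShift = e'.wtShift) (hv : e.vtShift p = e'.vtShift p') :
    e = e' ∧ (e.wtShift = 0 ∨ p = p') := by
  cases e <;> cases e' <;> simp [vtShift, wtShift, src, tgt, wt, vtSum] at hw hv ⊢ <;> omega

lemma abs_wShift_sub_lt (hw : e.wtShift = 0) (hp : p + e.src.length ≤ n)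
    (hp' : p' + e.src.length ≤ n) : |e.wShift p - e.wShift p'| < 2 * n + 1 := by
  rw [abs_lt]
  cases e <;>
    simp [wShift, wtShift, src, tgt, wt, wSum, prefixWtSum, List.range_succ] at hw hp hp' ⊢ <;>
    omega

lemma eq_keep_or_eq_of_wShift_eq (hw : e.wtShift = 0) (h : e.wShift p = e.wShift p') :
    e = keep ∨ p = p' := by
  cases e <;>
    simp [wShift, wtShift, src, tgt, wt, wSum, prefixWtSum, List.range_succ] at hw h ⊢ <;> omega

end Edit

section Shift

variable (e : Edit) (x y : List Bool)

lemma wt_edit : (wt (x ++ e.tgt ++ y) : ℤ) = wt (x ++ e.src ++ y) + e.wtShift := by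
  simp only [wt_append, Edit.wtShift]
  push_cast
  ring

lemma vtSum_edit :
    (vtSum (x ++ e.tgt ++ y) : ℤ) = vtSum (x ++ e.src ++ y) + e.vtShift x.length := by
  simp only [vtSum_append, List.length_append, e.length_tgt, Edit.vtShift, Edit.wtShift]
  push_cast
  ring

lemma wSum_edit (hw : e.wtShift = 0) :
    (wSum (x ++ e.tgt ++ y) : ℤ) = wSum (x ++ e.src ++ y) + e.wShift x.length := by
  have hwt : wt e.tgt = wt e.src := by rw [Edit.wtShift, sub_eq_zero] at hw; exact_mod_cast hw
  simp only [wSum_append, wt_append, List.length_append, e.length_tgt, hwt, Edit.wShift]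
  push_cast
  ring

end Shift

lemma eq_of_edit_tgt_eq {e : Edit} {x y x' y' : List Bool}
    (h : x ++ e.tgt ++ y = x' ++ e.tgt ++ y') (hx : x.length = x'.length) :
    x ++ e.src ++ y = x' ++ e.src ++ y' := by
  simp only [List.append_assoc] at h ⊢
  obtain ⟨rfl, h⟩ := List.append_inj h hx
  obtain rfl : y = y' := by simpa using h
  rfl

lemma flipAt_append_cons_s3 (x z : List Bool) (c : Bool) :
    flipAt (x ++ c :: z) x.length = x ++ (!c) :: z := by
  simp [flipAt]

lemma exists_eq_append_cons {u : List Bool} {i : ℕ} (hi : i < u.length) :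
    ∃ x c z, u = x ++ c :: z ∧ x.length = i :=
  ⟨u.take i, u[i], u.drop (i + 1), by rw [List.getElem_cons_drop, List.take_append_drop],
    by simp [hi.le]⟩

lemma E0.exists_edit {u w : List Bool} (h : E0 u w) :
    ∃ (e : Edit) (x y : List Bool), u = x ++ e.src ++ y ∧ w = x ++ e.tgt ++ y := by
  rcases h with rfl | ⟨i, hi, rfl⟩ | ⟨i, hi, rfl⟩
  · exact ⟨.keep, [], w, rfl, rfl⟩
  · obtain ⟨x, c, z, rfl, rfl⟩ := exists_eq_append_cons hi
    rw [flipAt_append_cons_s3]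
    cases c
    · exact ⟨.set, x, z, by simp [Edit.src], by simp [Edit.tgt]⟩
    · exact ⟨.clear, x, z, by simp [Edit.src], by simp [Edit.tgt]⟩
  · obtain ⟨x, c, z, rfl, rfl⟩ := exists_eq_append_cons (Nat.lt_of_succ_lt hi)
    rcases z with _ | ⟨d, z⟩
    · simp at hi
    have hflip : flipAt (x ++ (!c) :: d :: z) (x.length + 1) = x ++ (!c) :: (!d) :: z := by
      simpa using flipAt_append_cons_s3 (x ++ [!c]) z d
    rw [flipAt_append_cons_s3, hflip]
    cases c <;> cases d
    · exact ⟨.setPair, x, z, by simp [Edit.src], by simp [Edit.tgt]⟩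
    · exact ⟨.swapLeft, x, z, by simp [Edit.src], by simp [Edit.tgt]⟩
    · exact ⟨.swapRight, x, z, by simp [Edit.src], by simp [Edit.tgt]⟩
    · exact ⟨.clearPair, x, z, by simp [Edit.src], by simp [Edit.tgt]⟩

lemma modEq_of_mem_Cabc {n a b c : ℕ} {u v : List Bool} (hu : u ∈ Cabc n a b c)
    (hv : v ∈ Cabc n a b c) :
    (wt u : ℤ) ≡ wt v [ZMOD 5] ∧ (vtSum u : ℤ) ≡ vtSum v [ZMOD 2 * n + 3] ∧
      (wSum u : ℤ) ≡ wSum v [ZMOD 2 * n + 1] := by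
  obtain ⟨-, hua, hub, huc⟩ := hu
  obtain ⟨-, hva, hvb, hvc⟩ := hv
  refine ⟨?_, ?_, ?_⟩
  · exact_mod_cast Int.natCast_modEq_iff.2 (hub.trans hvb.symm)
  · exact_mod_cast Int.natCast_modEq_iff.2 (hua.trans hva.symm)
  · exact_mod_cast Int.natCast_modEq_iff.2 (huc.trans hvc.symm)

theorem code_abc_corrects_length_preserving_general
    (n a b c : ℕ)
    (u v : List Bool) (hu : u ∈ Cabc n a b c) (hv : v ∈ Cabc n a b c)
    (w : List Bool)
    (hw1 : E0 u w) (hw2 : E0 v w) : u = v := by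
  obtain ⟨hwt, hvt, hws⟩ := modEq_of_mem_Cabc hu hv
  obtain ⟨e, x, y, rfl, rfl⟩ := hw1.exists_edit
  obtain ⟨e', x', y', rfl, hw⟩ := hw2.exists_edit
  have hp : x.length + e.src.length ≤ n := by have := hu.1; simp at this; omega
  have hp' : x'.length + e'.src.length ≤ n := by have := hv.1; simp at this; omega
  have hδ : e.wtShift = e'.wtShift :=
    eq_of_modEq_of_abs_sub_lt (hwt.add_left_cancel (by rw [← wt_edit, ← wt_edit, hw]))
      (Edit.abs_wtShift_sub_lt e e')
  have hvt' : e.vtShift x.length = e'.vtShift x'.length :=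
    eq_of_modEq_of_abs_sub_lt (hvt.add_left_cancel (by rw [← vtSum_edit, ← vtSum_edit, hw]))
      (Edit.abs_vtShift_sub_lt hδ hp hp')
  obtain ⟨rfl, hδ0 | hx⟩ := Edit.eq_of_vtShift_eq hδ hvt'
  · have hws' : e.wShift x.length = e.wShift x'.length :=
      eq_of_modEq_of_abs_sub_lt
        (hws.add_left_cancel (by rw [← wSum_edit _ _ _ hδ0, ← wSum_edit _ _ _ hδ0, hw]))
        (Edit.abs_wShift_sub_lt hδ0 hp hp')
    obtain rfl | hx := Edit.eq_keep_or_eq_of_wShift_eq hδ0 hws'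
    · exact hw
    · exact eq_of_edit_tgt_eq hw hx
  · exact eq_of_edit_tgt_eq hw hx

/-- `C_{(a,b,c)}` corrects a single occurrence of an operation
from `E₀`. -/
theorem code_abc_corrects_length_preserving
    (n a b c : ℕ) (hn : 1 ≤ n) (ha : a ≤ 2 * (n + 1)) (hb : b ≤ 4) (hc : c ≤ 2 * n)
    (u v : List Bool) (hu : u ∈ Cabc n a b c) (hv : v ∈ Cabc n a b c)
    (w : List Bool) (hwlen : w.length = n)
    (hw1 : E0 u w) (hw2 : E0 v w) : u = v :=
  code_abc_corrects_length_preserving_general n a b c u v hu hv w hw1 hw2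

end BinCode
end

section
/- Let q ≥ 2, k ≥ 1, n > 2k, let x ∈ Irr(n) be irreducible, and let x'' ∈ D_k^{*(≤1)}(x) be any descendant of x under any number of exact k-TDs and at most one k-ND. Set μ = μ(φ̄(x)) and μ'' = μ(φ̄(x'')). Then φ̂(x'') = φ̂(x) and the length difference satisfies |μ''| − |μ| ∈ {−k, 0, k, 2k}. -/
open List

namespace NoisyDup

variable {q : ℕ}

/-!
Write `z = φ̄(u)`. An exact duplication at position `i` inserts `k` zeros into `z` at `i`, so it
leaves `μ(z)` unchanged. A noisy duplication additionally perturbs a symbol `w_p` of the inserted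
copy in `w = T_{i,k}(u)`; this changes `φ̄(w)` only at the positions `p - k` and `p`, and position
`p - k` holds one of the freshly inserted zeros. Since `|μ(z)| ≡ |z| (mod k)`, changing one symbol
of `z` changes `|μ(z)|` by a multiple of `k` of absolute value `< 2k`, i.e. by `-k`, `0` or `k`; and
turning a `0` into another symbol never shortens `μ(z)`, because a zero run of length `x + y + 1` is
replaced by runs of lengths `x` and `y` and `(x + y + 1) % k ≤ x % k + y % k + 1`. The two changes
therefore add up to `-k`, `0`, `k` or `2k`.
-/

section MuLength

variable {k : ℕ}

lemma muAux_add_self (c : ℕ) (z : List (ZMod q)) : muAux k (c + k) z = muAux k c z := by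
  induction z generalizing c with
  | nil => simp [muAux]
  | cons b t ih =>
    by_cases hb : b = 0
    · simp only [muAux, if_pos hb, Nat.add_right_comm c k 1, ih]
    · simp [muAux, hb]

lemma muAux_replicate_zero_append (c s : ℕ) (z : List (ZMod q)) :
    muAux k c (List.replicate s 0 ++ z) = muAux k (c + s) z := by
  induction s generalizing c with
  | zero => rfl
  | succ s ih => simp [List.replicate_succ, muAux, ih, Nat.add_right_comm, Nat.add_assoc]

lemma muAux_insert_replicate_zero (c i : ℕ) (z : List (ZMod q)) :
    muAux k c (z.take i ++ List.replicate k 0 ++ z.drop i) = muAux k c z := by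
  induction z generalizing c i with
  | nil => simpa [muAux_add_self] using muAux_replicate_zero_append (k := k) c k ([] : List (ZMod q))
  | cons b t ih =>
    cases i with
    | zero => simp [muAux_replicate_zero_append, muAux_add_self]
    | succ i =>
      by_cases hb : b = 0
      · simpa [muAux, hb] using ih (c + 1) i
      · simpa [muAux, hb] using ih 0 i

lemma length_muAux_modEq (c : ℕ) (z : List (ZMod q)) :
    (muAux k c z).length ≡ c + z.length [MOD k] := by
  induction z generalizing c with
  | nil => simpa [muAux] using Nat.mod_modEq c k
  | cons b t ih =>
    by_cases hb : b = 0
    · simpa [muAux, hb, Nat.add_right_comm, Nat.add_assoc] using ih (c + 1)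
    · simp only [muAux, if_neg hb, List.length_append, List.length_replicate, List.length_cons]
      calc c % k + ((muAux k 0 t).length + 1) ≡ c + ((0 + t.length) + 1) [MOD k] :=
            (Nat.mod_modEq c k).add ((ih 0).add_right 1)
        _ = c + (t.length + 1) := by omega

lemma exists_length_muAux_eq_mod_add (z : List (ZMod q)) :
    ∃ m R, ∀ c, (muAux k c z).length = (c + m) % k + R := by
  induction z with
  | nil => exact ⟨0, 0, fun c => by simp [muAux]⟩
  | cons b t ih =>
    by_cases hb : b = 0
    · obtain ⟨m, R, h⟩ := ih
      exact ⟨m + 1, R, fun c => by simp [muAux, hb, h, Nat.add_right_comm, Nat.add_assoc]⟩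
    · exact ⟨0, 1 + (muAux k 0 t).length, fun c => by
      simp only [muAux, hb, ↓reduceIte, List.length_append, List.length_replicate,
        List.length_cons, add_zero]
      omega⟩

lemma exists_length_muAux_append_eq_add (c : ℕ) (l : List (ZMod q)) :
    ∃ E c', ∀ w, (muAux k c (l ++ w)).length = E + (muAux k c' w).length := by
  induction l generalizing c with
  | nil => exact ⟨0, c, fun w => by simp⟩
  | cons b t ih =>
    by_cases hb : b = 0
    · obtain ⟨E, c', h⟩ := ih (c + 1)
      exact ⟨E, c', fun w => by simp [muAux, hb, h]⟩
    · obtain ⟨E, c', h⟩ := ih 0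
      exact ⟨c % k + 1 + E, c', fun w => by
        simp only [List.cons_append, muAux, hb, ↓reduceIte, List.length_append,
          List.length_replicate, List.length_cons, h]
        omega⟩

end MuLength

section MuLengthChange

variable {k : ℕ}

-- `x` and `y` are the numbers of zeros immediately before and after `b`.
lemma exists_length_muAux_append_cons (c : ℕ) (l t : List (ZMod q)) :
    ∃ B x y, ∀ b : ZMod q, (muAux k c (l ++ b :: t)).length =
      B + if b = 0 then (x + y + 1) % k else x % k + y % k + 1 := by
  obtain ⟨E, c', hl⟩ := exists_length_muAux_append_eq_add (k := k) c l
  obtain ⟨m, R, ht⟩ := exists_length_muAux_eq_mod_add (k := k) t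
  refine ⟨E + R, c', m, fun b => ?_⟩
  by_cases hb : b = 0
  · simp only [hb, hl, muAux, ↓reduceIte, ht, Nat.add_right_comm, Nat.add_assoc]; omega
  · simp only [hl, muAux, hb, ↓reduceIte, List.length_append, List.length_replicate,
      List.length_cons, ht, zero_add]
    omega

lemma length_muAux_append_zero_cons_le (c : ℕ) (l t : List (ZMod q)) (b : ZMod q) :
    (muAux k c (l ++ 0 :: t)).length ≤ (muAux k c (l ++ b :: t)).length := by
  obtain ⟨B, x, y, h⟩ := exists_length_muAux_append_cons (k := k) c l t
  rw [h, h, if_pos rfl]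
  split_ifs
  · rfl
  · have : (x + y + 1) % k = (x % k + y % k + 1) % k := by simp [Nat.add_mod]
    have := Nat.mod_le (x % k + y % k + 1) k
    omega

lemma length_muAux_append_cons_lt (hk : 0 < k) (c : ℕ) (l t : List (ZMod q)) (a b : ZMod q) :
    (muAux k c (l ++ a :: t)).length < (muAux k c (l ++ b :: t)).length + 2 * k := by
  obtain ⟨B, x, y, h⟩ := exists_length_muAux_append_cons (k := k) c l t
  have := Nat.mod_lt (x + y + 1) hk
  have := Nat.mod_lt x hk
  have := Nat.mod_lt y hk
  rw [h, h]
  split_ifs <;> omega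

lemma Int.mem_neg_zero_self_of_dvd {k d : ℤ} (hd : k ∣ d) (h₁ : -(2 * k) < d) (h₂ : d < 2 * k) :
    d ∈ ({-k, 0, k} : Set ℤ) := by
  obtain ⟨t, rfl⟩ := hd
  have hk : 0 < k := by linarith
  have : -2 < t := by nlinarith
  have : t < 2 := by nlinarith
  interval_cases t <;> simp

lemma length_mu_set_sub_dvd (z : List (ZMod q)) (r : ℕ) (b : ZMod q) :
    (k : ℤ) ∣ ((mu k (z.set r b)).length : ℤ) - (mu k z).length := by
  have h := length_muAux_modEq (k := k) 0 (z.set r b)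
  rw [List.length_set] at h
  exact ((length_muAux_modEq 0 z).trans h.symm).dvd

lemma length_mu_set_sub_mem (hk : 0 < k) (z : List (ZMod q)) (r : ℕ) (b : ZMod q) :
    ((mu k (z.set r b)).length : ℤ) - (mu k z).length ∈ ({-(k : ℤ), 0, (k : ℤ)} : Set ℤ) := by
  by_cases hr : r < z.length
  · have hz : z.take r ++ z[r] :: z.drop (r + 1) = z := by simp
    have hset : z.take r ++ b :: z.drop (r + 1) = z.set r b := by
      rw [List.set_eq_take_append_cons_drop, if_pos hr]
    have h₁ := length_muAux_append_cons_lt hk 0 (z.take r) (z.drop (r + 1)) b z[r]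
    have h₂ := length_muAux_append_cons_lt hk 0 (z.take r) (z.drop (r + 1)) z[r] b
    rw [hz, hset] at h₁ h₂
    exact Int.mem_neg_zero_self_of_dvd (length_mu_set_sub_dvd z r b) (by unfold mu; omega)
      (by unfold mu; omega)
  · simp [List.set_eq_of_length_le (not_lt.mp hr)]

lemma length_mu_set_sub_mem_of_getD_eq_zero (hk : 0 < k) {z : List (ZMod q)} {r : ℕ}
    (hr : z.getD r 0 = 0) (b : ZMod q) :
    ((mu k (z.set r b)).length : ℤ) - (mu k z).length ∈ ({0, (k : ℤ)} : Set ℤ) := by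
  have hle : (mu k z).length ≤ (mu k (z.set r b)).length := by
    by_cases hr' : r < z.length
    · rw [List.getD_eq_getElem _ _ hr'] at hr
      have hz : z.take r ++ 0 :: z.drop (r + 1) = z := by rw [← hr]; simp
      have hset : z.take r ++ b :: z.drop (r + 1) = z.set r b := by
        rw [List.set_eq_take_append_cons_drop, if_pos hr']
      have h := length_muAux_append_zero_cons_le (k := k) 0 (z.take r) (z.drop (r + 1)) b
      rwa [hz, hset] at h
    · rw [List.set_eq_of_length_le (not_lt.mp hr')]
  have h := length_mu_set_sub_mem hk z r b
  simp only [Set.mem_insert_iff, Set.mem_singleton_iff] at h ⊢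
  omega

lemma length_mu_set_set_sub_mem (hk : 0 < k) {z : List (ZMod q)} {r : ℕ} (hr : z.getD r 0 = 0)
    (b : ZMod q) (r' : ℕ) (b' : ZMod q) :
    ((mu k ((z.set r b).set r' b')).length : ℤ) - (mu k z).length ∈
      ({-(k : ℤ), 0, (k : ℤ), 2 * (k : ℤ)} : Set ℤ) := by
  have h₁ := length_mu_set_sub_mem_of_getD_eq_zero hk hr b
  have h₂ := length_mu_set_sub_mem hk (z.set r b) r' b'
  simp only [Set.mem_insert_iff, Set.mem_singleton_iff] at h₁ h₂ ⊢
  omega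

end MuLengthChange

section BarPhi

variable {k : ℕ}

lemma length_barPhi (x : List (ZMod q)) : (barPhi k x).length = x.length - k := by
  simp [barPhi]

lemma getElem_barPhi (x : List (ZMod q)) (m : ℕ) (h : m < (barPhi k x).length) :
    (barPhi k x)[m] = x.getD (m + k) 0 - x.getD m 0 := by
  simp [barPhi]

lemma getD_dup {i : ℕ} {u : List (ZMod q)} (h : i + k ≤ u.length) (m : ℕ) :
    (dup i k u).getD m 0 = if m < i + k then u.getD m 0 else u.getD (m - k) 0 := by
  simp only [dup, if_pos h, List.getD_eq_getElem?_getD, List.getElem?_append, List.getElem?_take,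
    List.getElem?_drop, List.length_append, List.length_take, List.length_drop]
  split_ifs <;> first | rfl | (congr 2; omega)

lemma barPhi_dup {i : ℕ} {u : List (ZMod q)} (h : i + k ≤ u.length) :
    barPhi k (dup i k u) =
      (barPhi k u).take i ++ List.replicate k 0 ++ (barPhi k u).drop i := by
  have hlen : (dup i k u).length = u.length + k := by
    simp only [dup, h, ↓reduceIte, List.length_append, List.length_take, List.length_drop]
    omega
  apply List.ext_getElem
  · simp only [length_barPhi, hlen, List.length_append, List.length_take,
      List.length_replicate, List.length_drop]
    omega
  · intro m h₁ h₂
    simp only [getElem_barPhi, getD_dup h, List.getElem_append, List.getElem_take,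
      List.getElem_drop, List.getElem_replicate, List.length_append, List.length_take,
      List.length_replicate, length_barPhi]
    rw [length_barPhi, hlen] at h₁
    rw [show min i (u.length - k) = i by omega]
    split_ifs <;> first
      | (exfalso; omega)
      | rfl
      | rw [Nat.add_sub_cancel, sub_self]
      | rw [Nat.add_sub_cancel, show i + (m - (i + k)) = m - k by omega,
          Nat.sub_add_cancel (by omega : k ≤ m)]

lemma barPhi_set (hk : 0 < k) {p : ℕ} (hp : k ≤ p) (w : List (ZMod q)) (v : ZMod q) :
    barPhi k (w.set p v) =
      ((barPhi k w).set (p - k) (v - w.getD (p - k) 0)).set p (w.getD (p + k) 0 - v) := by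
  apply List.ext_getElem
  · simp [length_barPhi]
  · intro m h₁ h₂
    simp only [List.getElem_set, getElem_barPhi, List.getD_eq_getElem?_getD, List.getElem?_set]
    rw [length_barPhi, List.length_set] at h₁
    split_ifs <;> (try subst_vars) <;> first | (exfalso; omega) | simp_all

end BarPhi

section Steps

variable {k : ℕ} {u v : List (ZMod q)}

lemma take_dup (i : ℕ) (u : List (ZMod q)) : (dup i k u).take k = u.take k := by
  unfold dup
  split_ifs with h
  · rw [← List.take_add, List.take_append_of_le_length (by simp only [List.length_take]; omega), List.take_take,
      min_eq_left (by omega)]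
  · rfl

lemma ExactStep.take_eq (h : ExactStep k u v) : v.take k = u.take k := by
  obtain ⟨i, -, rfl⟩ := h
  exact take_dup i u

lemma ExactStep.mu_barPhi_eq (h : ExactStep k u v) : mu k (barPhi k v) = mu k (barPhi k u) := by
  obtain ⟨i, hi, rfl⟩ := h
  rw [barPhi_dup hi]
  exact muAux_insert_replicate_zero 0 i _

lemma ExactDesc.take_eq_and_mu_barPhi_eq (h : ExactDesc k u v) :
    v.take k = u.take k ∧ mu k (barPhi k v) = mu k (barPhi k u) := by
  induction h with
  | refl => exact ⟨rfl, rfl⟩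
  | tail _ hs ih => exact ⟨hs.take_eq.trans ih.1, hs.mu_barPhi_eq.trans ih.2⟩

lemma NoisyStep.take_eq (h : NoisyStep k u v) : v.take k = u.take k := by
  obtain ⟨i, a, j, -, -, hj₁, -, rfl⟩ := h
  rw [addAt, List.take_set_of_le (by omega), take_dup]

lemma NoisyStep.length_mu_barPhi_sub_mem (h : NoisyStep k u v) :
    ((mu k (barPhi k v)).length : ℤ) - (mu k (barPhi k u)).length ∈
      ({-(k : ℤ), 0, (k : ℤ), 2 * (k : ℤ)} : Set ℤ) := by
  obtain ⟨i, a, j, hi, -, hj₁, hj₂, rfl⟩ := h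
  have hk : 0 < k := by omega
  have hz : (barPhi k (dup i k u)).getD (j - 1 - k) 0 = 0 := by
    have : i ≤ (barPhi k u).length := by rw [length_barPhi]; omega
    simp only [barPhi_dup hi, List.getD_eq_getElem?_getD, List.getElem?_append,
      List.getElem?_replicate, List.length_append, List.length_take, List.length_replicate]
    rw [if_pos (by omega), if_neg (by omega), if_pos (by omega), Option.getD_some]
  rw [addAt, barPhi_set hk (by omega), ← ExactStep.mu_barPhi_eq ⟨i, hi, rfl⟩]
  exact length_mu_set_set_sub_mem hk hz _ _ _

end Steps

theorem root_length_change_general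
    (q k : ℕ)
    (x : List (ZMod q))
    (x'' : List (ZMod q)) (hdesc : x'' ∈ descCone k x) :
    hatPhi k x'' = hatPhi k x ∧
    ((mu k (barPhi k x'')).length : ℤ) - ((mu k (barPhi k x)).length : ℤ) ∈
      ({-(k : ℤ), 0, (k : ℤ), 2 * (k : ℤ)} : Set ℤ) := by
  rcases hdesc with hexact | ⟨u, v, hxu, huv, hvx⟩
  · obtain ⟨htake, hmu⟩ := hexact.take_eq_and_mu_barPhi_eq
    exact ⟨htake, by simp [hmu]⟩
  · obtain ⟨htake₁, hmu₁⟩ := hxu.take_eq_and_mu_barPhi_eq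
    obtain ⟨htake₃, hmu₃⟩ := hvx.take_eq_and_mu_barPhi_eq
    refine ⟨htake₃.trans (huv.take_eq.trans htake₁), ?_⟩
    rw [hmu₃, ← hmu₁]
    exact huv.length_mu_barPhi_sub_mem

/-- for an irreducible `x` and any descendant `x''` under many
exact `k`-TDs and at most one `k`-ND, the first `k` symbols are unchanged and
the length of the `μ`-root changes by `-k`, `0`, `k`, or `2k`. -/
theorem root_length_change
    (q k n : ℕ) (hq : 2 ≤ q) (hk : 1 ≤ k) (hn : 2 * k < n)
    (x : List (ZMod q)) (hx : x.length = n) (hirr : IsIrreducible k x)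
    (x'' : List (ZMod q)) (hdesc : x'' ∈ descCone k x) :
    hatPhi k x'' = hatPhi k x ∧
    ((mu k (barPhi k x'')).length : ℤ) - ((mu k (barPhi k x)).length : ℤ) ∈
      ({-(k : ℤ), 0, (k : ℤ), 2 * (k : ℤ)} : Set ℤ) :=
  root_length_change_general q k x x'' hdesc

end NoisyDup
end
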